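/- Let A be a completely prime filter in a restriction quantal frame Q and let a ∈ A be a partial isometry. Then A = (aA*)↑, i.e., A equals the upward closure of {ab* : b ∈ A}. -/
import Mathlib


/-- A restriction quantal frame: a frame `Q` with a monoid multiplication
distributing over arbitrary joins (a unital quantal frame), which is an
Ehresmann semigroup whose projections are exactly the elements below the
monoid unit `1` and whose unary operations `st` (`*`) and `pl` (`⁺`) preserve
joins, such that the top element is a join of partial isometries and the
partial isometries are closed under multiplication. -/
class RQF (Q : Type*) extends Order.Frame Q, Monoid Q where
  mul_sSup_distrib : ∀ (a : Q) (S : Set Q), a * sSup S = ⨆ b ∈ S, a * b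
  sSup_mul_distrib : ∀ (a : Q) (S : Set Q), sSup S * a = ⨆ b ∈ S, b * a
  st : Q → Q
  pl : Q → Q
  st_le_one : ∀ a : Q, st a ≤ 1
  pl_le_one : ∀ a : Q, pl a ≤ 1
  proj_comm : ∀ a b : Q, a ≤ 1 → b ≤ 1 → a * b = b * a
  proj_idem : ∀ a : Q, a ≤ 1 → a * a = a
  st_proj : ∀ a : Q, a ≤ 1 → st a = a
  pl_proj : ∀ a : Q, a ≤ 1 → pl a = a
  mul_st : ∀ a : Q, a * st a = a
  pl_mul : ∀ a : Q, pl a * a = a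
  st_mul_eq : ∀ a b : Q, st (a * b) = st (st a * b)
  pl_mul_eq : ∀ a b : Q, pl (a * b) = pl (a * pl b)
  st_sSup : ∀ S : Set Q, st (sSup S) = ⨆ a ∈ S, st a
  pl_sSup : ∀ S : Set Q, pl (sSup S) = ⨆ a ∈ S, pl a
  top_join_pi : sSup {a : Q | ∀ b, b ≤ a → b = pl b * a ∧ b = a * st b} = ⊤
  pi_mul_closed : ∀ a b : Q,
    (∀ c, c ≤ a → c = pl c * a ∧ c = a * st c) →
    (∀ c, c ≤ b → c = pl c * b ∧ c = b * st c) →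
    (∀ c, c ≤ a * b → c = pl c * (a * b) ∧ c = (a * b) * st c)

namespace RQF

variable {Q : Type*} [RQF Q]

/-- `a` is a partial isometry. -/
def PI (a : Q) : Prop := ∀ b, b ≤ a → b = pl b * a ∧ b = a * st b

/-- `a` and `b` are compatible. -/
def Compat (a b : Q) : Prop := a * st b = b * st a ∧ pl b * a = pl a * b

/-- A completely prime filter in `Q`: a proper filter such that whenever a
join lies in it, one of the joinands does. -/
def CPFilter (A : Set Q) : Prop :=
  A.Nonempty ∧
  (∀ a ∈ A, ∀ b : Q, a ≤ b → b ∈ A) ∧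
  (∀ a ∈ A, ∀ b ∈ A, a ⊓ b ∈ A) ∧
  (⊥ : Q) ∉ A ∧
  ∀ S : Set Q, sSup S ∈ A → ∃ s ∈ S, s ∈ A

/-- A completely prime filter in the frame `e↓ = 1↓` of projections. -/
def CPFilterProj (F : Set Q) : Prop :=
  F.Nonempty ∧
  (∀ f ∈ F, f ≤ (1 : Q)) ∧
  (∀ f ∈ F, ∀ g : Q, g ≤ (1 : Q) → f ≤ g → g ∈ F) ∧
  (∀ f ∈ F, ∀ g ∈ F, f ⊓ g ∈ F) ∧
  (⊥ : Q) ∉ F ∧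
  ∀ S : Set Q, (∀ s ∈ S, s ≤ (1 : Q)) → sSup S ∈ F → ∃ s ∈ S, s ∈ F

/-- Upward closure in `Q`. -/
def up (F : Set Q) : Set Q := {x | ∃ f ∈ F, f ≤ x}

/-- `d(A) = (A*)↑`. -/
def dF (A : Set Q) : Set Q := {x | ∃ a ∈ A, st a ≤ x}

/-- `r(A) = (A⁺)↑`. -/
def rF (A : Set Q) : Set Q := {x | ∃ a ∈ A, pl a ≤ x}

/-- `A · B = (AB)↑`. -/
def prodF (A B : Set Q) : Set Q := {x | ∃ a ∈ A, ∃ b ∈ B, a * b ≤ x}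

end RQF

namespace RQF

variable {Q : Type*} [RQF Q]

lemma st_mono' {a b : Q} (h : a ≤ b) : st a ≤ st b := by
  have hsup : a ⊔ b = sSup {a, b} := by rw [sSup_pair]
  have : st (sSup ({a, b} : Set Q)) = st a ⊔ st b := by
    rw [st_sSup]; rw [iSup_pair]
  have hb : st b = st a ⊔ st b := by
    rw [← this, ← hsup, sup_eq_right.mpr h]
  rw [hb]; exact le_sup_left

lemma mul_mono_right' (a : Q) {x y : Q} (h : x ≤ y) : a * x ≤ a * y := by
  have hsup : x ⊔ y = sSup {x, y} := by rw [sSup_pair]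
  have : a * sSup ({x, y} : Set Q) = a * x ⊔ a * y := by
    rw [mul_sSup_distrib]; rw [iSup_pair]
  have hy : a * y = a * x ⊔ a * y := by
    rw [← this, ← hsup, sup_eq_right.mpr h]
  rw [hy]; exact le_sup_left

end RQF

open RQF in
/-- if `A` is a completely prime filter and `a ∈ A` is a partial
isometry, then `A = (aA*)↑`. -/
theorem cpfilter_eq_up_mul_star {Q : Type*} [RQF Q]
    (A : Set Q) (hA : CPFilter A) (a : Q) (haA : a ∈ A) (hpi : PI a) :
    A = {x : Q | ∃ b ∈ A, a * st b ≤ x} := by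
  obtain ⟨-, hup, hinf, -, -⟩ := hA
  ext x
  constructor
  · intro hx
    refine ⟨a ⊓ x, hinf a haA x hx, ?_⟩
    have h := (hpi (a ⊓ x) inf_le_left).2
    calc a * st (a ⊓ x) = a ⊓ x := h.symm
      _ ≤ x := inf_le_right
  · rintro ⟨b, hbA, hle⟩
    have hab : a ⊓ b ∈ A := hinf a haA b hbA
    have h1 : a ⊓ b = a * st (a ⊓ b) := (hpi (a ⊓ b) inf_le_left).2
    have h2 : a * st (a ⊓ b) ≤ a * st b :=
      mul_mono_right' a (st_mono' inf_le_right)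
    exact hup (a ⊓ b) hab x (le_trans (h1 ▸ h2) hle)
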